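/- Let k be a field of characteristic zero and α ∈ k with α ≠ 0 and α ≠ 1. Then the cubic surface in ℙ³_k defined by x₀²x₁ + x₁²x₃ + x₂³ - (1+α)x₂²x₃ + αx₂x₃² = 0 is smooth; conversely if α ∈ {0,1} the surface is singular. -/
import Mathlib


open MvPolynomial

set_option maxHeartbeats 1000000

/-- For `α ∈ k` (`k` of characteristic zero), the cubic surface
`x₀²x₁ + x₁²x₃ + x₂³ - (1+α)x₂²x₃ + αx₂x₃² = 0` in `ℙ³` is smooth if and only if
`α ≠ 0` and `α ≠ 1`. -/
theorem stmt13 (k : Type*) [Field k] [CharZero k] (α : k)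
    (F : MvPolynomial (Fin 4) k)
    (hF : F = X 0 ^ 2 * X 1 + X 1 ^ 2 * X 3 + X 2 ^ 3 -
      C (1 + α) * (X 2 ^ 2 * X 3) + C α * (X 2 * X 3 ^ 2)) :
    (∀ v : Fin 4 → AlgebraicClosure k, v ≠ 0 →
      ¬ (eval v (MvPolynomial.map (algebraMap k (AlgebraicClosure k)) F) = 0 ∧
        ∀ i : Fin 4,
          eval v (pderiv i (MvPolynomial.map (algebraMap k (AlgebraicClosure k)) F))
            = 0)) ↔ (α ≠ 0 ∧ α ≠ 1) := by
  subst hF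
  have hinj : Function.Injective (algebraMap k (AlgebraicClosure k)) :=
    (algebraMap k (AlgebraicClosure k)).injective
  haveI : CharZero (AlgebraicClosure k) := charZero_of_injective_algebraMap hinj
  constructor
  · intro h
    constructor
    · rintro rfl
      refine h ![0, 0, 0, 1] (by intro hv; simpa using congrFun hv 3) ?_
      refine ⟨by simp [map_add, map_sub, map_mul, map_pow], fun i => ?_⟩
      fin_cases i <;> simp [map_add, map_sub, map_mul, map_pow]
    · rintro rfl
      refine h ![0, 0, 1, 1] (by intro hv; simpa using congrFun hv 3) ?_
      refine ⟨by simp [map_add, map_sub, map_mul, map_pow], fun i => ?_⟩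
      fin_cases i <;> · simp [map_add, map_sub, map_mul, map_pow]; try ring
  · rintro ⟨h0, h1⟩ v hv ⟨hFv, hD⟩
    have e0 := hD 0
    have e1 := hD 1
    have e2 := hD 2
    have e3 := hD 3
    simp [map_add, map_sub, map_mul, map_pow] at e0 e1 e2 e3 hFv
    set a : AlgebraicClosure k := algebraMap k (AlgebraicClosure k) α with ha
    have ha0 : a ≠ 0 := fun h => h0 (hinj (by simpa [ha] using h))
    have ha1 : a ≠ 1 := fun h => h1 (hinj (by simpa [ha] using h))
    have h2 : (2 : AlgebraicClosure k) ≠ 0 := two_ne_zero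
    have sq0 : ∀ x : AlgebraicClosure k, x ^ 2 = 0 → x = 0 := fun x hx =>
      pow_eq_zero_iff (n := 2) (by norm_num) |>.mp hx
    rcases e0 with hv1 | hv0
    · -- v 1 = 0
      have hv0 : v 0 = 0 := by
        rw [hv1] at e1; exact sq0 _ (by linear_combination e1)
      by_cases hv2 : v 2 = 0
      · have hv3 : v 3 = 0 := by
          have : a * v 3 ^ 2 = 0 := by rw [hv2] at e2; linear_combination e2
          rcases mul_eq_zero.mp this with h | h
          · exact absurd h ha0
          · exact sq0 _ h
        exact hv (funext fun i => by fin_cases i <;> simp [hv0, hv1, hv2, hv3])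
      · -- v 2 ≠ 0; from F: (v2 - v3)(v2 - a v3) = 0
        have hfac : v 2 * ((v 2 - v 3) * (v 2 - a * v 3)) = 0 := by
          rw [hv0, hv1] at hFv; linear_combination hFv
        rcases mul_eq_zero.mp hfac with h | h
        · exact hv2 h
        rcases mul_eq_zero.mp h with h | h
        · -- v 2 = v 3
          have h23 : v 3 = v 2 := by linear_combination -h
          have : (1 - a) * v 2 ^ 2 = 0 := by rw [h23] at e2; linear_combination e2
          rcases mul_eq_zero.mp this with h' | h'
          · exact ha1 (by linear_combination -h')
          · exact hv2 (sq0 _ h')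
        · -- v 2 = a * v 3
          have h23 : v 2 = a * v 3 := by linear_combination h
          have hv3 : v 3 ≠ 0 := fun h3 => hv2 (by rw [h23, h3, mul_zero])
          have : a * (a - 1) * v 3 ^ 2 = 0 := by rw [h23] at e2; linear_combination e2
          rcases mul_eq_zero.mp this with h' | h'
          · rcases mul_eq_zero.mp h' with h'' | h''
            · exact ha0 h''
            · exact ha1 (by linear_combination h'')
          · exact hv3 (sq0 _ h')
    · -- v 0 = 0
      by_cases hv1 : v 1 = 0
      · by_cases hv2 : v 2 = 0
        · have hv3 : v 3 = 0 := by
            have : a * v 3 ^ 2 = 0 := by rw [hv2] at e2; linear_combination e2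
            rcases mul_eq_zero.mp this with h | h
            · exact absurd h ha0
            · exact sq0 _ h
          exact hv (funext fun i => by fin_cases i <;> simp [hv0, hv1, hv2, hv3])
        · have hfac : v 2 * ((v 2 - v 3) * (v 2 - a * v 3)) = 0 := by
            rw [hv0, hv1] at hFv; linear_combination hFv
          rcases mul_eq_zero.mp hfac with h | h
          · exact hv2 h
          rcases mul_eq_zero.mp h with h | h
          · have h23 : v 3 = v 2 := by linear_combination -h
            have : (1 - a) * v 2 ^ 2 = 0 := by rw [h23] at e2; linear_combination e2
            rcases mul_eq_zero.mp this with h' | h'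
            · exact ha1 (by linear_combination -h')
            · exact hv2 (sq0 _ h')
          · have h23 : v 2 = a * v 3 := by linear_combination h
            have hv3 : v 3 ≠ 0 := fun h3 => hv2 (by rw [h23, h3, mul_zero])
            have : a * (a - 1) * v 3 ^ 2 = 0 := by rw [h23] at e2; linear_combination e2
            rcases mul_eq_zero.mp this with h' | h'
            · rcases mul_eq_zero.mp h' with h'' | h''
              · exact ha0 h''
              · exact ha1 (by linear_combination h'')
            · exact hv3 (sq0 _ h')
      · have hv3 : v 3 = 0 := by
          rw [hv0] at e1
          have : v 3 * (2 * v 1) = 0 := by linear_combination e1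
          rcases mul_eq_zero.mp this with h | h
          · exact h
          · rcases mul_eq_zero.mp h with h' | h'
            · exact absurd h' h2
            · exact absurd h' hv1
        have hv2 : v 2 = 0 := by
          have : (3 : AlgebraicClosure k) * v 2 ^ 2 = 0 := by rw [hv3] at e2; linear_combination e2
          rcases mul_eq_zero.mp this with h | h
          · exact absurd h three_ne_zero
          · exact sq0 _ h
        have : v 1 ^ 2 = 0 := by rw [hv2, hv3] at e3; linear_combination e3
        exact hv1 (sq0 _ this)
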